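/- Let v : ℂ → ℝ be continuous and subharmonic, let K be a compact set with connected complement, and suppose the Riesz measure Δv is supported on ∂K. Let U be a connected component of the interior of K and suppose Δv(closure of U) = 0. If u is a continuous subharmonic function on ℂ coinciding with v outside U, then the function w = max(u, v) on U extended by v on ℂ \ U is subharmonic on ℂ. -/

import Mathlib

open Metric intervalIntegral MeasureTheory

/-- `u` satisfies the sub-mean value inequality on circles contained (with their disk)
in `s`, together with continuity: a continuous subharmonic function on `s`. -/
def SubharmonicOnC (u : ℂ → ℝ) (s : Set ℂ) : Prop :=
  ContinuousOn u s ∧ ∀ z : ℂ, ∀ r : ℝ, 0 < r → closedBall z r ⊆ s →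
    u z ≤ (2 * Real.pi)⁻¹ *
      ∫ θ in (0 : ℝ)..2 * Real.pi, u (z + r * Complex.exp (θ * Complex.I))

/-- The Laplacian of a (twice differentiable) function `φ : ℂ → ℝ`, as the sum of the
second derivatives in the directions `1` and `I`. -/
noncomputable def lap (φ : ℂ → ℝ) (z : ℂ) : ℝ :=
  fderiv ℝ (fun w => fderiv ℝ φ w 1) z 1 +
    fderiv ℝ (fun w => fderiv ℝ φ w Complex.I) z Complex.I

/-- `μ` is the Riesz measure (distributional Laplacian) of `v`:
`∫ v Δφ = ∫ φ dμ` for all `C²` compactly supported test functions `φ`. -/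
def IsRieszMeasure (v : ℂ → ℝ) (μ : Measure ℂ) : Prop :=
  ∀ φ : ℂ → ℝ, ContDiff ℝ 2 φ → HasCompactSupport φ →
    ∫ z : ℂ, v z * lap φ z = ∫ z : ℂ, φ z ∂μ

/-! Since `u = v` off `U`, the glued function is `max u v` everywhere, and the maximum of two
subharmonic functions is subharmonic: its mean over each circle dominates the means of `u` and
of `v`, which dominate `u` and `v` at the centre. -/

namespace SubharmonicOnC

variable {u v : ℂ → ℝ} {s : Set ℂ}

theorem continuousOn (hu : SubharmonicOnC u s) : ContinuousOn u s :=
  hu.1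

theorem le_circleAverage (hu : SubharmonicOnC u s) {z : ℂ} {r : ℝ} (hr : 0 < r)
    (hball : closedBall z r ⊆ s) : u z ≤ Real.circleAverage u z r :=
  hu.2 z r hr hball

theorem sup (hu : SubharmonicOnC u s) (hv : SubharmonicOnC v s) :
    SubharmonicOnC (fun z => max (u z) (v z)) s := by
  have hcont : ContinuousOn (fun z => max (u z) (v z)) s := hu.continuousOn.sup hv.continuousOn
  refine ⟨hcont, fun z r hr hball => ?_⟩
  have hint : ∀ {f : ℂ → ℝ}, ContinuousOn f s → CircleIntegrable f z r := fun hf =>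
    (hf.mono (sphere_subset_closedBall.trans hball)).circleIntegrable hr.le
  change max (u z) (v z) ≤ Real.circleAverage (fun z => max (u z) (v z)) z r
  refine max_le ((hu.le_circleAverage hr hball).trans ?_) ((hv.le_circleAverage hr hball).trans ?_)
  · exact Real.circleAverage_mono (hint hu.continuousOn) (hint hcont) fun _ _ => le_max_left _ _
  · exact Real.circleAverage_mono (hint hv.continuousOn) (hint hcont) fun _ _ => le_max_right _ _

end SubharmonicOnC

open Classical in
theorem glued_max_subharmonic_general (v u : ℂ → ℝ) (U : Set ℂ)
    (hvsub : SubharmonicOnC v Set.univ)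
    (husub : SubharmonicOnC u Set.univ)
    (heq : Set.EqOn u v Uᶜ) :
    SubharmonicOnC (fun z => if z ∈ U then max (u z) (v z) else v z) Set.univ := by
  have hglue : (fun z => if z ∈ U then max (u z) (v z) else v z) = fun z => max (u z) (v z) := by
    funext z
    split_ifs with hz
    · rfl
    · rw [heq hz, max_self]
  rw [hglue]
  exact husub.sup hvsub

open Classical in
/-- Let `v` be continuous subharmonic on `ℂ` with Riesz measure `Δv` supported on the
boundary of a compact set `K` with connected complement. Let `U` be a connected
component of the interior of `K` with `Δv(closure U) = 0`. If `u` is continuous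
subharmonic on `ℂ` and coincides with `v` outside `U`, then the gluing
`w = max(u, v)` on `U`, `= v` off `U`, is subharmonic on `ℂ`. -/
theorem glued_max_subharmonic (v u : ℂ → ℝ) (K U : Set ℂ) (μ : Measure ℂ)
    (hv : Continuous v) (hvsub : SubharmonicOnC v Set.univ)
    (hK : IsCompact K) (hKc : IsConnected Kᶜ)
    (hμ : IsRieszMeasure v μ)
    (hsupp : μ (frontier K)ᶜ = 0)
    (hUcomp : ∃ x ∈ interior K, U = connectedComponentIn (interior K) x)
    (hUnull : μ (closure U) = 0)
    (hu : Continuous u) (husub : SubharmonicOnC u Set.univ)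
    (heq : Set.EqOn u v Uᶜ) :
    SubharmonicOnC (fun z => if z ∈ U then max (u z) (v z) else v z) Set.univ :=
  glued_max_subharmonic_general v u U hvsub husub heq
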